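/- arXiv:math/0207089 — 3 statements merged into one kernel-verified Lean document; each statement's English description precedes it below -/
import Mathlib

section
/- Let n ≥ 1, m ≥ 0, l ≥ 1 and let C_1,…,C_m, F_1,…,F_l, U, V, W : N → M_n(ℂ) be holomorphic maps on a connected open neighborhood N of 0 in ℂ^m × ℂ^l satisfying the system: [C_i,C_j]=0, [C_i,F_α]=0, [F_α,F_β]=0, ∂C_i/∂t_j=∂C_j/∂t_i, ∂C_i/∂y_α=∂F_α/∂t_i, ∂F_α/∂y_β=∂F_β/∂y_α, [C_i,U]=0, [F_α,U]=0, ∂U/∂t_i=[V,C_i]−C_i, ∂U/∂y_α=[V,F_α]−F_α, ∂W/∂t_i=[W,C_i], ∂W/∂y_α=[W,F_α], ∂V/∂t_i=−[W,C_i], ∂V/∂y_α=−[W,F_α]. Then: (1) V + W is a constant matrix Res_∞; (2) if moreover A : N → M_n(ℂ) is holomorphic with ∂A/∂t_i = C_i and ∂A/∂y_α = F_α for all i, α, then the map U + W + A − [Res_∞, A] is constant on N; in particular, for any two points (t,y), (t,0) ∈ N one has U(t,y) = U(t,0) − (W(t,y) − W(t,0)) + [Res_∞, A(t,y) − A(t,0)]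 − (A(t,y) − A(t,0)). -/
/-!
Statement 3 (Remark 2.10, first part): for a flat system, `V + W` is constant,
and with a primitive `A` of the 1-form `Σ C_i dt_i + Σ F_α dy_α` the combination
`U + W + A − [Res_∞, A]` is constant.
-/

noncomputable section

/-- `n × n` complex matrices. -/
abbrev Mat (n : ℕ) := Matrix (Fin n) (Fin n) ℂ

/-- The commutator `[A,B] = A*B - B*A`. -/
def matComm {n : ℕ} (A B : Mat n) : Mat n := A * B - B * A

/-- Entrywise holomorphy of a matrix-valued map on a set. -/
def MDiffOn {E : Type*} [NormedAddCommGroup E] [NormedSpace ℂ E] {n : ℕ}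
    (f : E → Mat n) (s : Set E) : Prop :=
  ∀ k j, DifferentiableOn ℂ (fun q => f q k j) s

/-- Entrywise partial derivative of a matrix-valued map at `p` in direction `v`. -/
def mpderiv {E : Type*} [NormedAddCommGroup E] [NormedSpace ℂ E] {n : ℕ}
    (f : E → Mat n) (p v : E) : Mat n :=
  Matrix.of fun k j => fderiv ℂ (fun q => f q k j) p v

/-- Points of `ℂ^m × ℂ^l` with coordinates `(t, y)`. -/
abbrev Pt (m l : ℕ) := (Fin m → ℂ) × (Fin l → ℂ)

/-- The full flatness system (2.16)–(2.29) at a point `p`. -/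
def FullSystemAt {n m l : ℕ}
    (C : Fin m → Pt m l → Mat n) (F : Fin l → Pt m l → Mat n)
    (U V W : Pt m l → Mat n) (p : Pt m l) : Prop :=
  (∀ i j, matComm (C i p) (C j p) = 0) ∧
  (∀ i α, matComm (C i p) (F α p) = 0) ∧
  (∀ α β, matComm (F α p) (F β p) = 0) ∧
  (∀ i j, mpderiv (C i) p (Pi.single j 1, 0) = mpderiv (C j) p (Pi.single i 1, 0)) ∧
  (∀ i α, mpderiv (C i) p (0, Pi.single α 1) = mpderiv (F α) p (Pi.single i 1, 0)) ∧
  (∀ α β, mpderiv (F α) p (0, Pi.single β 1) = mpderiv (F β) p (0, Pi.single α 1)) ∧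
  (∀ i, matComm (C i p) (U p) = 0) ∧
  (∀ α, matComm (F α p) (U p) = 0) ∧
  (∀ i, mpderiv U p (Pi.single i 1, 0) = matComm (V p) (C i p) - C i p) ∧
  (∀ α, mpderiv U p (0, Pi.single α 1) = matComm (V p) (F α p) - F α p) ∧
  (∀ i, mpderiv W p (Pi.single i 1, 0) = matComm (W p) (C i p)) ∧
  (∀ α, mpderiv W p (0, Pi.single α 1) = matComm (W p) (F α p)) ∧
  (∀ i, mpderiv V p (Pi.single i 1, 0) = - matComm (W p) (C i p)) ∧
  (∀ α, mpderiv V p (0, Pi.single α 1) = - matComm (W p) (F α p))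

/-! Along the coordinate direction with coefficient `X` (`C i` or `F α`) the system gives
`∂(V + W) = -[W, X] + [W, X] = 0`, and then, with `R = V + W` constant,
`∂(U + W + A - [R, A]) = [V, X] - X + [W, X] + X - [R, X] = 0`. A map with vanishing partial
derivatives on a connected open set is constant. -/

theorem ContinuousLinearMap.prod_pi_ext {R M ι κ : Type*} [Semiring R] [TopologicalSpace R]
    [AddCommMonoid M] [Module R M] [TopologicalSpace M] [Fintype ι] [Fintype κ]
    [DecidableEq ι] [DecidableEq κ] {L L' : (ι → R) × (κ → R) →L[R] M}
    (hfst : ∀ i, L (Pi.single i 1, 0) = L' (Pi.single i 1, 0))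
    (hsnd : ∀ k, L (0, Pi.single k 1) = L' (0, Pi.single k 1)) : L = L' :=
  ContinuousLinearMap.coe_injective <| LinearMap.prod_ext
    (LinearMap.pi_ext' fun i => LinearMap.ext_ring (hfst i))
    (LinearMap.pi_ext' fun k => LinearMap.ext_ring (hsnd k))

theorem matComm_add_left {n : ℕ} (A B X : Mat n) :
    matComm (A + B) X = matComm A X + matComm B X := by
  simp only [matComm, add_mul, mul_add]
  abel

theorem matComm_sub_right {n : ℕ} (R X Y : Mat n) :
    matComm R (X - Y) = matComm R X - matComm R Y := by
  simp only [matComm, mul_sub, sub_mul]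
  abel

section MatrixCalculus

open Topology
open scoped Matrix.Norms.Elementwise

variable {E : Type*} [NormedAddCommGroup E] [NormedSpace ℂ E] {n : ℕ} {f g : E → Mat n}
  {s : Set E} {p : E}

theorem mdiffOn_iff_differentiableOn : MDiffOn f s ↔ DifferentiableOn ℂ f s :=
  (differentiableOn_pi.trans (forall_congr' fun _ => differentiableOn_pi)).symm

theorem HasFDerivAt.mpderiv_eq {f' : E →L[ℂ] Mat n} (hf : HasFDerivAt f f' p) (v : E) :
    mpderiv f p v = f' v := by
  ext k j
  rw [mpderiv, Matrix.of_apply, (hasFDerivAt_pi'.1 (hasFDerivAt_pi'.1 hf k) j).fderiv]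
  rfl

theorem MDiffOn.hasFDerivAt (hf : MDiffOn f s) (hs : s ∈ 𝓝 p) :
    HasFDerivAt f (fderiv ℂ f p) p :=
  ((mdiffOn_iff_differentiableOn.1 hf).differentiableAt hs).hasFDerivAt

theorem MDiffOn.add (hf : MDiffOn f s) (hg : MDiffOn g s) : MDiffOn (fun q => f q + g q) s :=
  fun k j => (hf k j).add (hg k j)

theorem MDiffOn.sub (hf : MDiffOn f s) (hg : MDiffOn g s) : MDiffOn (fun q => f q - g q) s :=
  fun k j => (hf k j).sub (hg k j)

theorem MDiffOn.map (hf : MDiffOn f s) (Φ : Mat n →ₗ[ℂ] Mat n) :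
    MDiffOn (fun q => Φ (f q)) s :=
  mdiffOn_iff_differentiableOn.2 <| Φ.toContinuousLinearMap.differentiable.comp_differentiableOn
    (mdiffOn_iff_differentiableOn.1 hf)

theorem mpderiv_add (hf : MDiffOn f s) (hg : MDiffOn g s) (hs : s ∈ 𝓝 p) (v : E) :
    mpderiv (fun q => f q + g q) p v = mpderiv f p v + mpderiv g p v := by
  rw [(hf.hasFDerivAt hs).mpderiv_eq, (hg.hasFDerivAt hs).mpderiv_eq]
  exact ((hf.hasFDerivAt hs).add (hg.hasFDerivAt hs)).mpderiv_eq v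

theorem mpderiv_sub (hf : MDiffOn f s) (hg : MDiffOn g s) (hs : s ∈ 𝓝 p) (v : E) :
    mpderiv (fun q => f q - g q) p v = mpderiv f p v - mpderiv g p v := by
  rw [(hf.hasFDerivAt hs).mpderiv_eq, (hg.hasFDerivAt hs).mpderiv_eq]
  exact ((hf.hasFDerivAt hs).sub (hg.hasFDerivAt hs)).mpderiv_eq v

theorem mpderiv_map (hf : MDiffOn f s) (hs : s ∈ 𝓝 p) (Φ : Mat n →ₗ[ℂ] Mat n) (v : E) :
    mpderiv (fun q => Φ (f q)) p v = Φ (mpderiv f p v) := by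
  rw [(hf.hasFDerivAt hs).mpderiv_eq]
  exact (Φ.toContinuousLinearMap.hasFDerivAt.comp p (hf.hasFDerivAt hs)).mpderiv_eq v

theorem MDiffOn.const_matComm (hf : MDiffOn f s) (R : Mat n) :
    MDiffOn (fun q => matComm R (f q)) s :=
  hf.map (LinearMap.mulLeft ℂ R - LinearMap.mulRight ℂ R)

theorem mpderiv_const_matComm (hf : MDiffOn f s) (hs : s ∈ 𝓝 p) (R : Mat n) (v : E) :
    mpderiv (fun q => matComm R (f q)) p v = matComm R (mpderiv f p v) :=
  mpderiv_map hf hs (LinearMap.mulLeft ℂ R - LinearMap.mulRight ℂ R) v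

end MatrixCalculus

open scoped Matrix.Norms.Elementwise in
theorem MDiffOn.eq_of_mpderiv_eq_zero {m l n : ℕ} {f : Pt m l → Mat n} {s : Set (Pt m l)}
    (hf : MDiffOn f s) (hs : IsOpen s) (hs' : IsPreconnected s)
    (hfst : ∀ p ∈ s, ∀ i, mpderiv f p (Pi.single i 1, 0) = 0)
    (hsnd : ∀ p ∈ s, ∀ α, mpderiv f p (0, Pi.single α 1) = 0)
    {p q : Pt m l} (hp : p ∈ s) (hq : q ∈ s) : f p = f q := by
  refine hs.is_const_of_fderiv_eq_zero hs' (mdiffOn_iff_differentiableOn.1 hf) (fun x hx => ?_)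
    hp hq
  have hfx := (hf.hasFDerivAt (hs.mem_nhds hx)).mpderiv_eq
  exact ContinuousLinearMap.prod_pi_ext (fun i => (hfx _).symm.trans (hfst x hx i))
    (fun α => (hfx _).symm.trans (hsnd x hx α))

theorem stmt_3_general
    (n m l : ℕ)
    (N : Set (Pt m l)) (hNopen : IsOpen N) (hNconn : IsConnected N)
    (hN0 : (0 : Pt m l) ∈ N)
    (C : Fin m → Pt m l → Mat n) (F : Fin l → Pt m l → Mat n)
    (U V W : Pt m l → Mat n)
    (hUd : MDiffOn U N) (hVd : MDiffOn V N) (hWd : MDiffOn W N)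
    (hsys : ∀ p ∈ N, FullSystemAt C F U V W p) :
    -- (1) V + W is a constant matrix Res_∞ (= its value V 0 + W 0 at the origin)
    (∀ p ∈ N, ∀ q ∈ N, V p + W p = V q + W q) ∧
    -- (2) with a primitive A of the 1-form, U + W + A − [Res_∞, A] is constant
    (∀ A : Pt m l → Mat n, MDiffOn A N →
      (∀ p ∈ N, ∀ i, mpderiv A p (Pi.single i 1, 0) = C i p) →
      (∀ p ∈ N, ∀ α, mpderiv A p (0, Pi.single α 1) = F α p) →
      (∀ p ∈ N, ∀ q ∈ N,
        U p + W p + A p - matComm (V 0 + W 0) (A p) =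
          U q + W q + A q - matComm (V 0 + W 0) (A q)) ∧
      -- in particular, formula (2.58)
      (∀ (t : Fin m → ℂ) (y : Fin l → ℂ),
        ((t, y) : Pt m l) ∈ N → ((t, 0) : Pt m l) ∈ N →
        U (t, y) = U (t, 0) - (W (t, y) - W (t, 0)) +
          matComm (V 0 + W 0) (A (t, y) - A (t, 0)) - (A (t, y) - A (t, 0)))) := by
  have hNpre := hNconn.isPreconnected
  have hResInf : ∀ p ∈ N, ∀ q ∈ N, V p + W p = V q + W q := by
    refine fun p hp q hq => (hVd.add hWd).eq_of_mpderiv_eq_zero hNopen hNpre ?_ ?_ hp hq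
    all_goals
      intro x hx e
      obtain ⟨-, -, -, -, -, -, -, -, -, -, hWt, hWy, hVt, hVy⟩ := hsys x hx
      rw [mpderiv_add hVd hWd (hNopen.mem_nhds hx)]
      simp only [hVt, hVy, hWt, hWy, neg_add_cancel]
  refine ⟨hResInf, fun A hAd hAt hAy => ?_⟩
  have hG : ∀ p ∈ N, ∀ q ∈ N,
      U p + W p + A p - matComm (V 0 + W 0) (A p) =
        U q + W q + A q - matComm (V 0 + W 0) (A q) := by
    have hGd := ((hUd.add hWd).add hAd).sub (hAd.const_matComm (V 0 + W 0))
    refine fun p hp q hq => hGd.eq_of_mpderiv_eq_zero hNopen hNpre ?_ ?_ hp hq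
    all_goals
      intro x hx e
      obtain ⟨-, -, -, -, -, -, -, -, hUt, hUy, hWt, hWy, -, -⟩ := hsys x hx
      have hxN := hNopen.mem_nhds hx
      rw [mpderiv_sub ((hUd.add hWd).add hAd) (hAd.const_matComm _) hxN,
        mpderiv_add (hUd.add hWd) hAd hxN, mpderiv_add hUd hWd hxN,
        mpderiv_const_matComm hAd hxN, ← hResInf x hx 0 hN0, matComm_add_left]
      simp only [hUt, hUy, hWt, hWy, hAt x hx, hAy x hx]
      abel
  refine ⟨hG, fun t y hy h0 => ?_⟩
  rw [matComm_sub_right, ← sub_eq_zero, ← sub_eq_zero.2 (hG _ hy _ h0)]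
  abel

theorem stmt_3
    (n m l : ℕ) (hn : 0 < n) (hl : 0 < l)
    (N : Set (Pt m l)) (hNopen : IsOpen N) (hNconn : IsConnected N)
    (hN0 : (0 : Pt m l) ∈ N)
    (C : Fin m → Pt m l → Mat n) (F : Fin l → Pt m l → Mat n)
    (U V W : Pt m l → Mat n)
    (hCd : ∀ i, MDiffOn (C i) N) (hFd : ∀ α, MDiffOn (F α) N)
    (hUd : MDiffOn U N) (hVd : MDiffOn V N) (hWd : MDiffOn W N)
    (hsys : ∀ p ∈ N, FullSystemAt C F U V W p) :
    -- (1) V + W is a constant matrix Res_∞ (= its value V 0 + W 0 at the origin)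
    (∀ p ∈ N, ∀ q ∈ N, V p + W p = V q + W q) ∧
    -- (2) with a primitive A of the 1-form, U + W + A − [Res_∞, A] is constant
    (∀ A : Pt m l → Mat n, MDiffOn A N →
      (∀ p ∈ N, ∀ i, mpderiv A p (Pi.single i 1, 0) = C i p) →
      (∀ p ∈ N, ∀ α, mpderiv A p (0, Pi.single α 1) = F α p) →
      (∀ p ∈ N, ∀ q ∈ N,
        U p + W p + A p - matComm (V 0 + W 0) (A p) =
          U q + W q + A q - matComm (V 0 + W 0) (A q)) ∧
      -- in particular, formula (2.58)
      (∀ (t : Fin m → ℂ) (y : Fin l → ℂ),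
        ((t, y) : Pt m l) ∈ N → ((t, 0) : Pt m l) ∈ N →
        U (t, y) = U (t, 0) - (W (t, y) - W (t, 0)) +
          matComm (V 0 + W 0) (A (t, y) - A (t, 0)) - (A (t, y) - A (t, 0)))) :=
  stmt_3_general n m l N hNopen hNconn hN0 C F U V W hUd hVd hWd hsys
end
end

section
/- Let K be a nonzero finite-dimensional complex vector space, m ≥ 1, and let C_1,…,C_m, 𝒱 be endomorphisms of K such that C_i C_j = C_j C_i and C_i 𝒱 − 𝒱 C_i = C_i for all i,j. Let g be a symmetric nondegenerate ℂ-bilinear form on K with g(C_i a, b) = g(a, C_i b) and g(𝒱 a, b) = − g(a, 𝒱 b) for all a,b ∈ K and all i. Let ζ ∈ K and d ∈ ℂ with 𝒱 ζ = (d/2) ζ, and assume: (GC) ζ together with all vectors obtained from ζ by finitely many successive applications of C_1,…,C_m spans K; (IC) the linear map ℂ^m → K, (x_1,…,x_m) ↦ Σ_i x_i C_i ζ, is injective. Then: d is an integer with d ≥ 1; 𝒱 is diagonalizable and every eigenvalue of 𝒱 lies in { d/2 − k : k = 0, 1, …, d }; ker(𝒱 − (d/2)·id) = ℂ ζ; and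 ker(𝒱 − (d/2 − 1)·id) equals the span of C_1 ζ, …, C_m ζ and has dimension m. -/
/-!
Statement 6 (key step of Theorem 5.5): for a Frobenius type structure with
`𝒰 = 0`, the eigenvector/generation/injectivity conditions force `d` to be
a positive integer and determine the `𝒱`-eigenspace decomposition.
-/

theorem stmt_6
    (K : Type*) [AddCommGroup K] [Module ℂ K] [FiniteDimensional ℂ K]
    [Nontrivial K]
    (m : ℕ) (hm : 0 < m)
    (C : Fin m → Module.End ℂ K) (V : Module.End ℂ K)
    (hCC : ∀ i j, C i * C j = C j * C i)
    (hCV : ∀ i, C i * V - V * C i = C i)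
    (g : K →ₗ[ℂ] K →ₗ[ℂ] ℂ)
    (hgsym : ∀ a b, g a b = g b a)
    (hgnd : ∀ a, (∀ b, g a b = 0) → a = 0)
    (hgC : ∀ i, ∀ a b, g (C i a) b = g a (C i b))
    (hgV : ∀ a b, g (V a) b = - g a (V b))
    (ζ : K) (d : ℂ) (hζ : V ζ = (d / 2) • ζ)
    -- (GC) generation condition
    (hGC : Submodule.span ℂ
      {v : K | ∃ L : List (Fin m), v = ((L.map C).prod) ζ} = ⊤)
    -- (IC) injectivity condition
    (hIC : Function.Injective fun x : Fin m → ℂ => ∑ i, x i • C i ζ) :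
    ∃ dz : ℤ, (dz : ℂ) = d ∧ 1 ≤ dz ∧
      -- 𝒱 is diagonalizable
      (⨆ μ : ℂ, Module.End.eigenspace V μ) = ⊤ ∧
      -- eigenvalues lie in {d/2 - k : k = 0,…,d}
      (∀ μ : ℂ, Module.End.eigenspace V μ ≠ ⊥ →
        ∃ k : ℕ, (k : ℤ) ≤ dz ∧ μ = d / 2 - k) ∧
      -- ker(𝒱 - (d/2)·id) = ℂ ζ
      LinearMap.ker (V - (d / 2) • (1 : Module.End ℂ K)) =
        Submodule.span ℂ {ζ} ∧
      -- ker(𝒱 - (d/2 - 1)·id) = span of the C_i ζ, of dimension m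
      LinearMap.ker (V - (d / 2 - 1) • (1 : Module.End ℂ K)) =
        Submodule.span ℂ (Set.range fun i => C i ζ) ∧
      Module.finrank ℂ
        (LinearMap.ker (V - (d / 2 - 1) • (1 : Module.End ℂ K))) = m := by
  classical
  set E : ℂ → Submodule ℂ K := Module.End.eigenspace V with hE
  -- every word applied to ζ is an eigenvector
  have hw : ∀ L : List (Fin m), V (((L.map C).prod) ζ)
      = (d / 2 - L.length) • ((L.map C).prod) ζ := by
    intro L
    induction L with
    | nil => simpa using hζ
    | cons i L ih =>
      have hVC : ∀ x : K, V (C i x) = C i (V x) - C i x := by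
        intro x
        have h := LinearMap.congr_fun (hCV i) x
        simp only [LinearMap.sub_apply, Module.End.mul_apply] at h
        rw [eq_sub_iff_add_eq, add_comm (V (C i x)) (C i x)]
        exact (sub_eq_iff_eq_add.mp h).symm
      simp only [List.map_cons, List.prod_cons, Module.End.mul_apply]
      rw [hVC, ih, map_smul]
      have hlen : ((i :: L).length : ℂ) = (L.length : ℂ) + 1 := by
        push_cast [List.length_cons]; ring
      rw [hlen]
      module
  have hwE : ∀ L : List (Fin m),
      ((L.map C).prod) ζ ∈ E (d / 2 - L.length) := fun L =>
    Module.End.mem_eigenspace_iff.mpr (hw L)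
  -- diagonalizability
  have hsup : (⨆ μ : ℂ, E μ) = ⊤ := by
    rw [eq_top_iff, ← hGC]
    refine Submodule.span_le.mpr ?_
    rintro v ⟨L, rfl⟩
    exact Submodule.mem_iSup_of_mem _ (hwE L)
  have hind := Module.End.eigenspaces_iSupIndep V
  -- covering lemma
  have hcover : ∀ (μ : ℂ) (S : Submodule ℂ K),
      (∀ L : List (Fin m), d / 2 - L.length = μ → ((L.map C).prod) ζ ∈ S) →
      (⊤ : Submodule ℂ K) ≤ S ⊔ ⨆ (ν) (_ : ν ≠ μ), E ν := by
    intro μ S hS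
    rw [← hGC]
    refine Submodule.span_le.mpr ?_
    rintro v ⟨L, rfl⟩
    by_cases h : d / 2 - L.length = μ
    · exact Submodule.mem_sup_left (hS L h)
    · exact Submodule.mem_sup_right
        (Submodule.mem_iSup_of_mem _ (Submodule.mem_iSup_of_mem h (hwE L)))
  -- eigenvalue characterization
  have hA : ∀ μ : ℂ, E μ ≠ ⊥ → ∃ k : ℕ, μ = d / 2 - k := by
    intro μ hne
    by_contra hcon
    push_neg at hcon
    apply hne
    have h1 : (⊤ : Submodule ℂ K) ≤ ⨆ (ν) (_ : ν ≠ μ), E ν := by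
      have := hcover μ ⊥ (fun L hL => absurd hL.symm (hcon L.length))
      simpa using this
    have h2 : (⨆ (ν) (_ : ν ≠ μ), E ν) = ⊤ := top_le_iff.mp h1
    have hd := hind μ
    rw [h2] at hd
    exact disjoint_top.mp hd
  -- eigenspaces are spanned by words of the right length
  have hEk : ∀ k : ℕ, E (d / 2 - k) = Submodule.span ℂ
      {v : K | ∃ L : List (Fin m), L.length = k ∧ v = ((L.map C).prod) ζ} := by
    intro k
    set Wk : Submodule ℂ K := Submodule.span ℂ
      {v : K | ∃ L : List (Fin m), L.length = k ∧ v = ((L.map C).prod) ζ}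
      with hWk
    have hWE : Wk ≤ E (d / 2 - k) := by
      refine Submodule.span_le.mpr ?_
      rintro v ⟨L, hL, rfl⟩
      have := hwE L
      rwa [hL] at this
    refine le_antisymm ?_ hWE
    intro v hv
    have hvT : v ∈ Wk ⊔ ⨆ (ν) (_ : ν ≠ d / 2 - (k : ℂ)), E ν := by
      refine hcover (d / 2 - k) Wk ?_ trivial
      intro L hL
      have hlen : L.length = k := by
        have h1 : (L.length : ℂ) = (k : ℂ) := by
          have := sub_right_injective hL
          exact this
        exact_mod_cast h1
      exact Submodule.subset_span ⟨L, hlen, rfl⟩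
    obtain ⟨a, ha, b, hb, hab⟩ := Submodule.mem_sup.mp hvT
    have hbE : b ∈ E (d / 2 - k) := by
      have : b = v - a := by rw [← hab]; abel
      rw [this]
      exact Submodule.sub_mem _ hv (hWE ha)
    have hb0 : b = 0 := Submodule.disjoint_def.mp (hind (d / 2 - k)) b hbE hb
    rw [← hab, hb0, add_zero]
    exact ha
  -- pairing
  have hpair : ∀ (l μ : ℂ), l + μ ≠ 0 →
      ∀ v ∈ E l, ∀ u ∈ E μ, g v u = 0 := by
    intro l μ hne v hv u hu
    rw [hE, Module.End.mem_eigenspace_iff] at hv hu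
    have h1 : l * g v u = -(μ * g v u) := by
      calc l * g v u = g (l • v) u := by simp
        _ = g (V v) u := by rw [hv]
        _ = - g v (V u) := hgV v u
        _ = - g v (μ • u) := by rw [hu]
        _ = -(μ * g v u) := by simp
    have h2 : (l + μ) * g v u = 0 := by linear_combination h1
    exact (mul_eq_zero.mp h2).resolve_left hne
  -- symmetry of eigenvalues
  have hCl : ∀ l : ℂ, E l ≠ ⊥ → E (-l) ≠ ⊥ := by
    intro l hne hbot
    obtain ⟨v, hv, hv0⟩ := (Submodule.ne_bot_iff _).mp hne
    apply hv0
    apply hgnd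
    intro b
    have hb : b ∈ (⊤ : Submodule ℂ K) := trivial
    rw [← hsup] at hb
    have hle : (⨆ μ : ℂ, E μ) ≤ LinearMap.ker (g v) := by
      refine iSup_le fun μ => ?_
      by_cases h : l + μ = 0
      · have hμ : μ = -l := by linear_combination h
        rw [hμ, hbot]
        exact bot_le
      · intro u hu
        exact LinearMap.mem_ker.mpr (hpair l μ h v hv u hu)
    exact LinearMap.mem_ker.mp (hle hb)
  -- ζ ≠ 0
  have hζ0 : ζ ≠ 0 := by
    intro h
    have h2 : (fun _ : Fin m => (1 : ℂ)) = (fun _ : Fin m => (0 : ℂ)) :=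
      hIC (by simp [h])
    have := congrFun h2 ⟨0, hm⟩
    exact one_ne_zero this
  -- linear independence of the C i ζ
  have hli : LinearIndependent ℂ (fun i => C i ζ) := by
    rw [Fintype.linearIndependent_iff]
    intro x hx i
    have hx0 : x = (fun _ : Fin m => (0 : ℂ)) := hIC (by simpa using hx)
    exact congrFun hx0 i
  -- nonemptiness of the two relevant eigenspaces
  have hEd : E (d / 2) ≠ ⊥ :=
    (Submodule.ne_bot_iff _).mpr ⟨ζ, Module.End.mem_eigenspace_iff.mpr hζ, hζ0⟩
  have i0 : Fin m := ⟨0, hm⟩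
  have h1mem : C i0 ζ ∈ E (d / 2 - 1) := by
    have := hwE [i0]
    simpa using this
  have hEd1 : E (d / 2 - 1) ≠ ⊥ :=
    (Submodule.ne_bot_iff _).mpr ⟨C i0 ζ, h1mem, hli.ne_zero i0⟩
  -- d is a natural number
  obtain ⟨k, hk⟩ := hA _ (hCl _ hEd)
  have hdk : (k : ℂ) = d := by linear_combination hk
  obtain ⟨k', hk'⟩ := hA _ (hCl _ hEd1)
  have hkk' : (k' : ℂ) + 1 = (k : ℂ) := by linear_combination hk' - hdk
  have hkk : k = k' + 1 := by exact_mod_cast hkk'.symm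
  have hk1 : 1 ≤ k := by omega
  -- kernels are eigenspaces
  have hker : ∀ c : ℂ, LinearMap.ker (V - c • (1 : Module.End ℂ K)) = E c := by
    intro c
    ext x
    simp [hE, Module.End.mem_eigenspace_iff, LinearMap.sub_apply, sub_eq_zero]
  have hker1 : LinearMap.ker (V - (d / 2 - 1) • (1 : Module.End ℂ K)) =
      Submodule.span ℂ (Set.range fun i => C i ζ) := by
    rw [hker]
    have h1 : (d / 2 - 1 : ℂ) = d / 2 - (1 : ℕ) := by simp
    rw [h1, hEk 1]
    congr 1
    ext v
    constructor
    · rintro ⟨L, hL, rfl⟩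
      obtain ⟨i, rfl⟩ := List.length_eq_one_iff.mp hL
      exact ⟨i, by simp⟩
    · rintro ⟨i, rfl⟩
      exact ⟨[i], rfl, by simp⟩
  refine ⟨(k : ℤ), by exact_mod_cast hdk, by exact_mod_cast hk1, hsup, ?_, ?_, hker1, ?_⟩
  · -- eigenvalue bounds
    intro μ hne
    obtain ⟨j, hj⟩ := hA μ hne
    obtain ⟨j', hj'⟩ := hA _ (hCl _ hne)
    refine ⟨j, ?_, hj⟩
    have hsum : (j : ℂ) + (j' : ℂ) = (k : ℂ) := by
      linear_combination hj + hj' - hdk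
    have hsum' : j + j' = k := by exact_mod_cast hsum
    exact_mod_cast Nat.le_of_add_right_le (le_of_eq hsum')
  · -- top eigenspace
    rw [hker]
    have h0 : (d / 2 : ℂ) = d / 2 - (0 : ℕ) := by simp
    rw [h0, hEk 0]
    congr 1
    ext v
    constructor
    · rintro ⟨L, hL, rfl⟩
      rw [List.length_eq_zero_iff.mp hL]
      simp
    · rintro rfl
      exact ⟨[], rfl, by simp⟩
  · -- dimension
    rw [hker1, finrank_span_eq_card hli, Fintype.card_fin]
end

section
/- Fix the weights w(x_0)=w(x_1)=w(x_2)=1 and w(x_3)=w(x_4)=w(x_5)=2 on ℂ[x_0,…,x_5]. The ℂ-subspace of the space of weighted homogeneous polynomials of weighted degree 18 spanned by all products g·h, where g and h are weighted homogeneous of weighted degree 9, equals the set of weighted homogeneous polynomials of weighted degree 18 which lie in the ideal (x_0, x_1, x_2). -/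
open MvPolynomial

private lemma cons_val_five {α : Type*} (a0 a1 a2 a3 a4 a5 : α) :
    ![a0,a1,a2,a3,a4,a5] 5 = a5 := rfl

private lemma weight_eval6 (d : Fin 6 →₀ ℕ) :
    (Finsupp.weight ![1,1,1,2,2,2]) d
      = d 0 + d 1 + d 2 + 2 * d 3 + 2 * d 4 + 2 * d 5 := by
  rw [Finsupp.weight_apply, Finsupp.sum_fintype]
  · simp [Fin.sum_univ_six, cons_val_five]
    ring
  · intro i; simp

private lemma split6 (d : Fin 6 →₀ ℕ)
    (h18 : d 0 + d 1 + d 2 + 2*d 3 + 2*d 4 + 2*d 5 = 18)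
    (hx : d 0 ≠ 0 ∨ d 1 ≠ 0 ∨ d 2 ≠ 0) :
    ∃ a b : Fin 6 →₀ ℕ, a + b = d ∧
      a 0 + a 1 + a 2 + 2*a 3 + 2*a 4 + 2*a 5 = 9 ∧
      b 0 + b 1 + b 2 + 2*b 3 + 2*b 4 + 2*b 5 = 9 := by
  obtain ⟨a3, a4, a5, h3, h4, h5, hsum2⟩ :
      ∃ a3 a4 a5, a3 ≤ d 3 ∧ a4 ≤ d 4 ∧ a5 ≤ d 5 ∧
        a3 + a4 + a5 = min (d 3 + d 4 + d 5) 4 := by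
    refine ⟨min (d 3) (min (d 3 + d 4 + d 5) 4),
      min (d 4) (min (d 3 + d 4 + d 5) 4 - min (d 3) (min (d 3 + d 4 + d 5) 4)),
      min (d 3 + d 4 + d 5) 4 - min (d 3) (min (d 3 + d 4 + d 5) 4)
        - min (d 4) (min (d 3 + d 4 + d 5) 4 - min (d 3) (min (d 3 + d 4 + d 5) 4)),
      ?_, ?_, ?_, ?_⟩
    all_goals omega
  set k := min (d 3 + d 4 + d 5) 4 with hk
  obtain ⟨a0, a1, a2, h0, h1, h2, hsum1⟩ :
      ∃ a0 a1 a2, a0 ≤ d 0 ∧ a1 ≤ d 1 ∧ a2 ≤ d 2 ∧ a0 + a1 + a2 = 9 - 2*k := by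
    refine ⟨min (d 0) (9 - 2*k), min (d 1) (9 - 2*k - min (d 0) (9 - 2*k)),
      9 - 2*k - min (d 0) (9 - 2*k) - min (d 1) (9 - 2*k - min (d 0) (9 - 2*k)),
      ?_, ?_, ?_, ?_⟩
    all_goals omega
  refine ⟨Finsupp.equivFunOnFinite.symm ![a0,a1,a2,a3,a4,a5],
    Finsupp.equivFunOnFinite.symm
      ![d 0 - a0, d 1 - a1, d 2 - a2, d 3 - a3, d 4 - a4, d 5 - a5], ?_, ?_, ?_⟩
  · ext i
    fin_cases i <;> simp [Finsupp.add_apply, cons_val_five] <;> omega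
  · simp [cons_val_five]; omega
  · simp [cons_val_five]; omega

theorem stmt_9
    (wt : Fin 6 → ℕ) (hwt : wt = ![1, 1, 1, 2, 2, 2]) :
    Submodule.span ℂ
        {p : MvPolynomial (Fin 6) ℂ | ∃ g h : MvPolynomial (Fin 6) ℂ,
          g.IsWeightedHomogeneous wt 9 ∧ h.IsWeightedHomogeneous wt 9 ∧
          p = g * h} =
      weightedHomogeneousSubmodule ℂ wt 18 ⊓
        Submodule.restrictScalars ℂ
          (Ideal.span {(X 0 : MvPolynomial (Fin 6) ℂ), X 1, X 2}) := by
  subst hwt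
  have hset : ({(X 0 : MvPolynomial (Fin 6) ℂ), X 1, X 2} : Set (MvPolynomial (Fin 6) ℂ))
      = X '' ({0, 1, 2} : Set (Fin 6)) := by
    simp [Set.image_insert_eq]
  apply le_antisymm
  · rw [Submodule.span_le]
    rintro p ⟨g, h, hg, hh, rfl⟩
    refine Submodule.mem_inf.2 ⟨?_, ?_⟩
    · exact hg.mul hh
    · rw [Submodule.restrictScalars_mem]
      apply Ideal.mul_mem_right
      rw [hset, mem_ideal_span_X_image]
      intro m hm
      have h9 : (Finsupp.weight ![1,1,1,2,2,2]) m = 9 := hg (mem_support_iff.mp hm)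
      rw [weight_eval6] at h9
      by_contra hc
      push_neg at hc
      have h0 := hc 0 (by simp)
      have h1 := hc 1 (by simp)
      have h2 := hc 2 (by simp)
      omega
  · rintro p hp
    rw [Submodule.mem_inf, mem_weightedHomogeneousSubmodule, Submodule.restrictScalars_mem,
      hset, mem_ideal_span_X_image] at hp
    obtain ⟨hwh, hid⟩ := hp
    rw [← p.support_sum_monomial_coeff]
    apply Submodule.sum_mem
    intro d hd
    have h18 : d 0 + d 1 + d 2 + 2*d 3 + 2*d 4 + 2*d 5 = 18 := by
      rw [← weight_eval6]; exact hwh (mem_support_iff.mp hd)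
    obtain ⟨i, hi, hine⟩ := hid d hd
    obtain ⟨a, b, hab, ha, hb⟩ := split6 d h18 (by
      rcases hi with rfl | rfl | rfl
      · exact Or.inl hine
      · exact Or.inr (Or.inl hine)
      · exact Or.inr (Or.inr hine))
    apply Submodule.subset_span
    refine ⟨monomial a (p.coeff d), monomial b 1, ?_, ?_, ?_⟩
    · exact isWeightedHomogeneous_monomial _ _ _ (by rw [weight_eval6]; exact ha)
    · exact isWeightedHomogeneous_monomial _ _ _ (by rw [weight_eval6]; exact hb)
    · rw [monomial_mul, hab, mul_one]
end
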